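/- With the identifications of the previous context, define the 2-form ω on g/m by ω(ξ, ξ') := (1/2)(⟨Y, X'⟩ - ⟨X, Y'⟩) for ξ = (X,a,Y), ξ' = (X',a',Y') (this is the exterior derivative d E* computed from the Lie bracket: dE*(ξ,ξ') = -E*([ξ,ξ'] mod m)). Then ω is M-invariant and satisfies ω(F_X, G_Y) = c⟨X,Y⟩ for a nonzero constant c, where F_X = (0,0,X) and G_Y = (Y,0,Y); in particular the pairing (X,Y) ↦ ω(F_X, G_Y) is a nondegenerate bilinear form on ℝⁿ × ℝⁿ. -/
import Mathlib


open Matrix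

abbrev GmodM (n : ℕ) := (Fin n → ℝ) × ℝ × (Fin n → ℝ)

def Mact {n : ℕ} (B : Matrix (Fin n) (Fin n) ℝ) (ξ : GmodM n) : GmodM n :=
  (B.mulVec ξ.1, ξ.2.1, B.mulVec ξ.2.2)

/-- The `2`-form `ω = dE*` on `g/m`: for `ξ = (X, a, Y)` and `ξ' = (X', a', Y')`,
`ω(ξ, ξ') = ½(⟨Y, X'⟩ - ⟨X, Y'⟩)`. -/
noncomputable def omega2 {n : ℕ} (ξ ξ' : GmodM n) : ℝ :=
  (1 / 2) * ((∑ i, ξ.2.2 i * ξ'.1 i) - ∑ i, ξ.1 i * ξ'.2.2 i)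

/-- `F_X = (0, 0, X) ∈ p/m`. -/
def Fvec {n : ℕ} (X : Fin n → ℝ) : GmodM n := (0, 0, X)

/-- `G_Y = (Y, 0, Y) ∈ k/m`. -/
def Gvec {n : ℕ} (Y : Fin n → ℝ) : GmodM n := (Y, 0, Y)

lemma dot_mulVec_eq {n : ℕ} (B : Matrix (Fin n) (Fin n) ℝ) (hB : Bᵀ * B = 1)
    (v w : Fin n → ℝ) : ∑ i, B.mulVec v i * B.mulVec w i = ∑ i, v i * w i := by
  have h1 : Bᵀ.mulVec (B.mulVec v) = v := by
    rw [Matrix.mulVec_mulVec, hB, Matrix.one_mulVec]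
  calc ∑ i, B.mulVec v i * B.mulVec w i
      = B.mulVec v ⬝ᵥ B.mulVec w := rfl
    _ = v ⬝ᵥ w := by
        rw [Matrix.dotProduct_mulVec, ← Matrix.mulVec_transpose, h1]
    _ = ∑ i, v i * w i := rfl

/-- The `2`-form `ω(ξ, ξ') = ½(⟨Y, X'⟩ - ⟨X, Y'⟩)` on `g/m` is
`M`-invariant and satisfies `ω(F_X, G_Y) = c ⟨X, Y⟩` for a nonzero constant `c`; in particular
the pairing `(X, Y) ↦ ω(F_X, G_Y)` is nondegenerate. -/
theorem omega2_invariant_nondegenerate (n : ℕ) :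
    (∀ B : Matrix (Fin n) (Fin n) ℝ, Bᵀ * B = 1 → B.det = 1 →
      ∀ ξ ξ' : GmodM n, omega2 (Mact B ξ) (Mact B ξ') = omega2 ξ ξ') ∧
    (∃ c : ℝ, c ≠ 0 ∧ ∀ X Y : Fin n → ℝ,
      omega2 (Fvec X) (Gvec Y) = c * ∑ i, X i * Y i) ∧
    (∀ X : Fin n → ℝ, (∀ Y : Fin n → ℝ, omega2 (Fvec X) (Gvec Y) = 0) → X = 0) ∧
    (∀ Y : Fin n → ℝ, (∀ X : Fin n → ℝ, omega2 (Fvec X) (Gvec Y) = 0) → Y = 0) := by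
  have key : ∀ X Y : Fin n → ℝ, omega2 (Fvec X) (Gvec Y) = (1/2) * ∑ i, X i * Y i := by
    intro X Y
    simp [omega2, Fvec, Gvec]
  refine ⟨?_, ⟨1/2, by norm_num, key⟩, ?_, ?_⟩
  · intro B hB _ ξ ξ'
    simp only [omega2, Mact, dot_mulVec_eq B hB]
  · intro X hX
    have h := hX X
    rw [key] at h
    have hs : ∑ i, X i * X i = 0 := by linarith
    funext i
    have := Finset.sum_eq_zero_iff_of_nonneg (fun i _ => mul_self_nonneg (X i)) |>.mp hs i (Finset.mem_univ i)
    exact pow_eq_zero_iff (n := 2) (by norm_num) |>.mp (by rw [sq]; exact this)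
  · intro Y hY
    have h := hY Y
    rw [key] at h
    have hs : ∑ i, Y i * Y i = 0 := by linarith
    funext i
    have := Finset.sum_eq_zero_iff_of_nonneg (fun i _ => mul_self_nonneg (Y i)) |>.mp hs i (Finset.mem_univ i)
    exact pow_eq_zero_iff (n := 2) (by norm_num) |>.mp (by rw [sq]; exact this)
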